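/- Let K be a field of characteristic different from 2 and let b, B ∈ K be nonzero and c, C ∈ K arbitrary. Then the Lie algebras g^6_{0bc} and g^6_{0BC} are isomorphic. -/
import Mathlib


variable (K : Type*) [Field K]

/-- The bracket of the Lie algebra `g^6_{abc}` on `K^6` (indices `0..5` correspond to
`e_1..e_6`): the only nonzero brackets among basis vectors are `⁅e_1, e_{i+1}⁆ = e_i` for
`2 ≤ i ≤ 5`, `⁅e_4, e_5⁆ = a e_2`, `⁅e_4, e_6⁆ = b e_2 + a e_3` and
`⁅e_5, e_6⁆ = c e_2 + b e_3 + a e_4`. -/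
def g6b (a b c : K) (x y : Fin 6 → K) : Fin 6 → K :=
  ![0,
    x 0 * y 2 - x 2 * y 0 + a * (x 3 * y 4 - x 4 * y 3)
      + b * (x 3 * y 5 - x 5 * y 3) + c * (x 4 * y 5 - x 5 * y 4),
    x 0 * y 3 - x 3 * y 0 + a * (x 3 * y 5 - x 5 * y 3) + b * (x 4 * y 5 - x 5 * y 4),
    x 0 * y 4 - x 4 * y 0 + a * (x 4 * y 5 - x 5 * y 4),
    x 0 * y 5 - x 5 * y 0,
    0]

/-- The Lie algebras `g^6_{abc}` and `g^6_{ABC}` are isomorphic: there is a bijective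
linear map preserving the brackets. -/
def g6Iso (a b c A B C : K) : Prop :=
  ∃ f : (Fin 6 → K) ≃ₗ[K] (Fin 6 → K),
    ∀ x y, f (g6b K a b c x y) = g6b K A B C (f x) (f y)


@[simp] lemma vec6_five {α : Type*} (a b c d e f : α) : ![a,b,c,d,e,f] 5 = f := rfl

set_option maxHeartbeats 1000000 in
lemma g6Iso_trans {a b c A B C A' B' C' : K} (h1 : g6Iso K a b c A B C)
    (h2 : g6Iso K A B C A' B' C') : g6Iso K a b c A' B' C' := by
  obtain ⟨f, hf⟩ := h1
  obtain ⟨g, hg⟩ := h2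
  exact ⟨f.trans g, fun x y => by simp [LinearEquiv.trans_apply, hf, hg]⟩

def shearMap (b c l : K) : (Fin 6 → K) ≃ₗ[K] (Fin 6 → K) where
  toFun x := ![x 0, x 1 - 2*l*b*x 2 - l*c*x 3, x 2 - l*b*x 3, x 3, x 4, x 5 + l*x 0]
  invFun y := ![y 0, y 1 + 2*l*b*(y 2 + l*b*y 3) + l*c*y 3, y 2 + l*b*y 3, y 3, y 4,
    y 5 - l*y 0]
  map_add' x y := by funext i; fin_cases i <;> simp [vec6_five] <;> ring
  map_smul' r x := by funext i; fin_cases i <;> simp [vec6_five] <;> ring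
  left_inv x := by funext i; fin_cases i <;> simp [vec6_five] <;> ring
  right_inv y := by funext i; fin_cases i <;> simp [vec6_five] <;> ring

set_option maxHeartbeats 2000000 in
lemma g6Iso_shear (b c c' l : K) (h : c' = c + 2*l*b^2) : g6Iso K 0 b c' 0 b c := by
  refine ⟨shearMap K b c l, fun x y => ?_⟩
  subst h
  funext i
  fin_cases i <;> simp [shearMap, g6b, vec6_five] <;> ring

def scaleMap (t : K) (ht : t ≠ 0) : (Fin 6 → K) ≃ₗ[K] (Fin 6 → K) where
  toFun x := ![x 0, t*x 1, t*x 2, t*x 3, t*x 4, t*x 5]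
  invFun y := ![y 0, t⁻¹*y 1, t⁻¹*y 2, t⁻¹*y 3, t⁻¹*y 4, t⁻¹*y 5]
  map_add' x y := by funext i; fin_cases i <;> simp [vec6_five] <;> ring
  map_smul' r x := by funext i; fin_cases i <;> simp [vec6_five] <;> ring
  left_inv x := by funext i; fin_cases i <;> simp [vec6_five, ht]
  right_inv y := by funext i; fin_cases i <;> simp [vec6_five, ht]

set_option maxHeartbeats 2000000 in
lemma g6Iso_scale (b B t : K) (ht : t ≠ 0) (h : b = t*B) : g6Iso K 0 b 0 0 B 0 := by
  refine ⟨scaleMap K t ht, fun x y => ?_⟩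
  subst h
  funext i
  fin_cases i <;> simp [scaleMap, g6b, vec6_five] <;> ring

/-- Over a field of characteristic different from 2, for any nonzero `b, B ∈ K` and any
`c, C ∈ K`, the Lie algebras `g^6_{0bc}` and `g^6_{0BC}` are isomorphic. -/
theorem stmt6 (hchar : ringChar K ≠ 2) (b B c C : K) (hb : b ≠ 0) (hB : B ≠ 0) :
    g6Iso K 0 b c 0 B C := by
  have h2 : (2 : K) ≠ 0 := Ring.two_ne_zero hchar
  have step1 : g6Iso K 0 b c 0 b 0 :=
    g6Iso_shear K b 0 c (c/(2*b^2)) (by field_simp; ring)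
  have step2 : g6Iso K 0 b 0 0 B 0 :=
    g6Iso_scale K b B (b/B) (div_ne_zero hb hB) (by field_simp)
  have step3 : g6Iso K 0 B 0 0 B C :=
    g6Iso_shear K B C 0 (-(C/(2*B^2))) (by field_simp; ring)
  exact g6Iso_trans K (g6Iso_trans K step1 step2) step3
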